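/- (Quantum state distinguishability via the local energy.) Let θ ∈ ℝ be the QET-optimal angle, i.e. cos 2θ = (h²+2k²)/√((h²+2k²)² + (hk)²) and sin 2θ = hk/√((h²+2k²)² + (hk)²). Then for every μ ∈ {−1,+1}: Tr[ρ(μ,μ,θ)·(H₂+V)] < 0 while Tr[ρ(μ,−μ,θ)·(H₂+V)] > 0; hence the prover can distinguish whether the verifier applied Q₁ = U_B(μ,θ) or Q₂ = U_B(−μ,θ) from the sign of the observed local energy. -/

import Mathlib

/-!
Write the ground state as `a|00⟩ - b|11⟩`, where `a² - b² = -h/r` and `2ab = k/r`. The vector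
`U_B(ν,θ) P_A(μ) g` then has explicit real coordinates, and its expectations of `Z₂`, `X⊗X` and
`I₄` give `Tr[ρ(μ,ν,θ)(H₂+V)] = ((h²+2k²)(1 - cos 2θ) - μν hk sin 2θ) / r` whenever
`μ² = ν² = 1`. At the optimal angle `(cos 2θ, sin 2θ) = (A, B)/D` with `A = h²+2k²`, `B = hk`
and `D = √(A²+B²)`, this equals `(A - D)/r < 0` for `ν = μ` and `(A - (A² - B²)/D)/r > 0`
for `ν = -μ`.
-/

open Matrix Kronecker
open scoped ComplexOrder

noncomputable section

abbrev M2 : Type := Matrix (Fin 2) (Fin 2) ℂ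
abbrev M4 : Type := Matrix (Fin 2 × Fin 2) (Fin 2 × Fin 2) ℂ

/-- Pauli X matrix. -/
def σx : M2 := !![0, 1; 1, 0]
/-- Pauli Y matrix. -/
def σy : M2 := !![0, -Complex.I; Complex.I, 0]
/-- Pauli Z matrix. -/
def σz : M2 := !![1, 0; 0, -1]

def X1 : M4 := σx ⊗ₖ (1 : M2)
def Z1 : M4 := σz ⊗ₖ (1 : M2)
def Z2 : M4 := (1 : M2) ⊗ₖ σz
def Y2 : M4 := (1 : M2) ⊗ₖ σy
def XX : M4 := σx ⊗ₖ σx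

def H1m (k h : ℝ) : M4 := (h : ℂ) • Z1 + ((h ^ 2 / Real.sqrt (h ^ 2 + k ^ 2) : ℝ) : ℂ) • (1 : M4)
def H2m (k h : ℝ) : M4 := (h : ℂ) • Z2 + ((h ^ 2 / Real.sqrt (h ^ 2 + k ^ 2) : ℝ) : ℂ) • (1 : M4)
def Vm (k h : ℝ) : M4 :=
  ((2 * k : ℝ) : ℂ) • XX + ((2 * k ^ 2 / Real.sqrt (h ^ 2 + k ^ 2) : ℝ) : ℂ) • (1 : M4)
def Hm (k h : ℝ) : M4 := H1m k h + H2m k h + Vm k h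

def e00 : (Fin 2 × Fin 2) → ℂ := fun p => if p = (0, 0) then 1 else 0
def e11 : (Fin 2 × Fin 2) → ℂ := fun p => if p = (1, 1) then 1 else 0

/-- the ground state of the minimal QET Hamiltonian -/
def gs (k h : ℝ) : (Fin 2 × Fin 2) → ℂ := fun p =>
  ((1 / Real.sqrt 2 * Real.sqrt (1 - h / Real.sqrt (h ^ 2 + k ^ 2)) : ℝ) : ℂ) * e00 p
  - ((1 / Real.sqrt 2 * Real.sqrt (1 + h / Real.sqrt (h ^ 2 + k ^ 2)) : ℝ) : ℂ) * e11 p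

/-- the rank-one operator |g⟩⟨g| -/
def gProj (k h : ℝ) : M4 := Matrix.vecMulVec (gs k h) (star (gs k h))

/-- Alice's projective measurement operator -/
def PA (μ : ℝ) : M4 := (2 : ℂ)⁻¹ • ((1 : M4) + (μ : ℂ) • X1)

/-- Bob's conditional unitary -/
def UB (ν θ : ℝ) : M4 :=
  ((Real.cos θ : ℝ) : ℂ) • (1 : M4) - ((Complex.I * ν * Real.sin θ) : ℂ) • Y2

/-- the post-protocol state -/
def ρQET (k h θ : ℝ) : M4 :=
  UB (-1) θ * PA (-1) * gProj k h * PA (-1) * (UB (-1) θ)ᴴ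
  + UB 1 θ * PA 1 * gProj k h * PA 1 * (UB 1 θ)ᴴ

/-- the normalized post-measurement state with prover outcome μ and verifier operation UB ν θ -/
def ρMN (k h μ ν θ : ℝ) : M4 := (2 : ℂ) • (UB ν θ * PA μ * gProj k h * PA μ * (UB ν θ)ᴴ)

namespace Matrix

variable {n R : Type*} [Fintype n] [CommSemiring R]

theorem mul_vecMulVec_star_mul_conjTranspose [StarRing R] (A : Matrix n n R) (v : n → R) :
    A * vecMulVec v (star v) * Aᴴ = vecMulVec (A *ᵥ v) (star (A *ᵥ v)) := by
  rw [mul_vecMulVec, vecMulVec_mul, star_mulVec]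

theorem trace_vecMulVec_mul (v w : n → R) (M : Matrix n n R) :
    (vecMulVec v w * M).trace = w ⬝ᵥ (M *ᵥ v) := by
  rw [vecMulVec_mul, trace_vecMulVec, dotProduct_comm, ← dotProduct_mulVec]

end Matrix

theorem PA_conjTranspose (μ : ℝ) : (PA μ)ᴴ = PA μ := by
  have hσx : σxᴴ = σx := by ext i j; fin_cases i <;> fin_cases j <;> simp [σx]
  simp [PA, X1, conjTranspose_kronecker, hσx]

def postState (a b μ ν θ : ℝ) : Fin 2 × Fin 2 → ℝ := fun p =>
  ![![a * Real.cos θ + μ * ν * b * Real.sin θ, ν * a * Real.sin θ - μ * b * Real.cos θ],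
    ![μ * a * Real.cos θ + ν * b * Real.sin θ, μ * ν * a * Real.sin θ - b * Real.cos θ]] p.1 p.2 / 2

theorem UB_mul_PA_mulVec (a b μ ν θ : ℝ) :
    (UB ν θ * PA μ) *ᵥ (fun p => (a : ℂ) * e00 p - (b : ℂ) * e11 p)
      = fun p => (postState a b μ ν θ p : ℂ) := by
  ext ⟨i, j⟩
  fin_cases i <;> fin_cases j <;>
  · simp only [postState, UB, PA, e00, e11, X1, Y2, σx, σy,
      mul_apply, mulVec, dotProduct, Fintype.sum_prod_type,
      Fin.sum_univ_two, kroneckerMap_apply, one_apply, Matrix.smul_apply, Matrix.add_apply,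
      Matrix.sub_apply, of_apply, cons_val', cons_val_zero, cons_val_one, empty_val',
      cons_val_fin_one, smul_eq_mul, Prod.mk.injEq]
    norm_num
    ring_nf
    simp only [Complex.I_sq]
    ring

section expectation

variable (x : Fin 2 × Fin 2 → ℝ)

theorem dotProduct_one_mulVec_ofReal :
    star (Complex.ofReal ∘ x) ⬝ᵥ ((1 : M4) *ᵥ (Complex.ofReal ∘ x))
      = ((x (0, 0) ^ 2 + x (0, 1) ^ 2 + x (1, 0) ^ 2 + x (1, 1) ^ 2 : ℝ) : ℂ) := by
  simp only [dotProduct, one_mulVec, Fintype.sum_prod_type, Fin.sum_univ_two, Function.comp_apply,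
    Pi.star_apply, RCLike.star_def, Complex.conj_ofReal]
  push_cast
  ring

theorem dotProduct_Z2_mulVec_ofReal :
    star (Complex.ofReal ∘ x) ⬝ᵥ (Z2 *ᵥ (Complex.ofReal ∘ x))
      = ((x (0, 0) ^ 2 - x (0, 1) ^ 2 + x (1, 0) ^ 2 - x (1, 1) ^ 2 : ℝ) : ℂ) := by
  simp only [dotProduct, mulVec, Z2, σz, Fintype.sum_prod_type, Fin.sum_univ_two,
    Function.comp_apply, Pi.star_apply, RCLike.star_def, Complex.conj_ofReal, kroneckerMap_apply, one_apply, of_apply,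
    cons_val', cons_val_fin_one, cons_val_zero, cons_val_one]
  push_cast
  norm_num
  ring

theorem dotProduct_XX_mulVec_ofReal :
    star (Complex.ofReal ∘ x) ⬝ᵥ (XX *ᵥ (Complex.ofReal ∘ x))
      = ((2 * (x (0, 0) * x (1, 1) + x (0, 1) * x (1, 0)) : ℝ) : ℂ) := by
  simp only [dotProduct, mulVec, XX, σx, Fintype.sum_prod_type, Fin.sum_univ_two,
    Function.comp_apply, Pi.star_apply, RCLike.star_def, Complex.conj_ofReal, kroneckerMap_apply, of_apply,
    cons_val', cons_val_fin_one, cons_val_zero, cons_val_one]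
  push_cast
  ring

end expectation

section postState

variable (a b : ℝ) {μ ν : ℝ} (θ : ℝ)

theorem dotProduct_one_mulVec_postState (hμ : μ ^ 2 = 1) (hν : ν ^ 2 = 1) :
    star (Complex.ofReal ∘ postState a b μ ν θ) ⬝ᵥ
        ((1 : M4) *ᵥ (Complex.ofReal ∘ postState a b μ ν θ))
      = (((a ^ 2 + b ^ 2) / 2 : ℝ) : ℂ) := by
  rw [dotProduct_one_mulVec_ofReal]
  congr 1
  simp only [postState, cons_val', cons_val_zero, cons_val_one, cons_val_fin_one]
  linear_combination (a ^ 2 + b ^ 2) * ((Real.cos θ ^ 2 + ν ^ 2 * Real.sin θ ^ 2) / 4 * hμ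
    + Real.sin θ ^ 2 / 2 * hν + Real.sin_sq_add_cos_sq θ / 2)

theorem dotProduct_Z2_mulVec_postState (hμ : μ ^ 2 = 1) (hν : ν ^ 2 = 1) :
    star (Complex.ofReal ∘ postState a b μ ν θ) ⬝ᵥ (Z2 *ᵥ (Complex.ofReal ∘ postState a b μ ν θ))
      = ((((a ^ 2 - b ^ 2) * Real.cos (2 * θ) + μ * ν * (2 * a * b) * Real.sin (2 * θ)) / 2
          : ℝ) : ℂ) := by
  rw [dotProduct_Z2_mulVec_ofReal]
  congr 1
  simp only [postState, cons_val', cons_val_zero, cons_val_one, cons_val_fin_one,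
    Real.cos_two_mul', Real.sin_two_mul]
  linear_combination (a ^ 2 - b ^ 2) * ((Real.cos θ ^ 2 - ν ^ 2 * Real.sin θ ^ 2) / 4 * hμ
    - Real.sin θ ^ 2 / 2 * hν)

theorem dotProduct_XX_mulVec_postState (hμ : μ ^ 2 = 1) (hν : ν ^ 2 = 1) :
    star (Complex.ofReal ∘ postState a b μ ν θ) ⬝ᵥ (XX *ᵥ (Complex.ofReal ∘ postState a b μ ν θ))
      = (((μ * ν * (a ^ 2 - b ^ 2) * Real.sin (2 * θ) - 2 * a * b * Real.cos (2 * θ)) / 2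
          : ℝ) : ℂ) := by
  rw [dotProduct_XX_mulVec_ofReal]
  congr 1
  simp only [postState, cons_val', cons_val_zero, cons_val_one, cons_val_fin_one,
    Real.cos_two_mul', Real.sin_two_mul]
  linear_combination a * b * ((ν ^ 2 * Real.sin θ ^ 2 - Real.cos θ ^ 2) / 2 * hμ
    + Real.sin θ ^ 2 * hν)

end postState

section groundState

variable (k h : ℝ)

def gsA : ℝ := 1 / Real.sqrt 2 * Real.sqrt (1 - h / Real.sqrt (h ^ 2 + k ^ 2))
def gsB : ℝ := 1 / Real.sqrt 2 * Real.sqrt (1 + h / Real.sqrt (h ^ 2 + k ^ 2))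

theorem gs_eq : gs k h = fun p => (gsA k h : ℂ) * e00 p - (gsB k h : ℂ) * e11 p := rfl

theorem abs_div_sqrt_sq_add_sq_le_one : |h / Real.sqrt (h ^ 2 + k ^ 2)| ≤ 1 := by
  rw [abs_div, abs_of_nonneg (Real.sqrt_nonneg _)]
  exact div_le_one_of_le₀ (Real.abs_le_sqrt (by nlinarith)) (Real.sqrt_nonneg _)

theorem gsA_sq : gsA k h ^ 2 = (1 - h / Real.sqrt (h ^ 2 + k ^ 2)) / 2 := by
  have := (abs_le.mp (abs_div_sqrt_sq_add_sq_le_one k h)).2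
  rw [gsA, mul_pow, div_pow, Real.sq_sqrt zero_le_two, Real.sq_sqrt (by linarith)]
  ring

theorem gsB_sq : gsB k h ^ 2 = (1 + h / Real.sqrt (h ^ 2 + k ^ 2)) / 2 := by
  have := (abs_le.mp (abs_div_sqrt_sq_add_sq_le_one k h)).1
  rw [gsB, mul_pow, div_pow, Real.sq_sqrt zero_le_two, Real.sq_sqrt (by linarith)]
  ring

end groundState

theorem two_mul_gsA_mul_gsB {k : ℝ} (h : ℝ) (hk : 0 < k) :
    2 * gsA k h * gsB k h = k / Real.sqrt (h ^ 2 + k ^ 2) := by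
  have hr2 : Real.sqrt (h ^ 2 + k ^ 2) ^ 2 = h ^ 2 + k ^ 2 := Real.sq_sqrt (by positivity)
  have hprod : (2 * gsA k h * gsB k h) ^ 2 = (k / Real.sqrt (h ^ 2 + k ^ 2)) ^ 2 := by
    rw [mul_pow, mul_pow, gsA_sq, gsB_sq]
    field_simp
    linear_combination hr2
  exact (pow_left_inj₀ (by unfold gsA gsB; positivity) (by positivity) two_ne_zero).mp hprod

theorem ρMN_eq_smul_vecMulVec (k h μ ν θ : ℝ) :
    ρMN k h μ ν θ = (2 : ℂ) • vecMulVec (Complex.ofReal ∘ postState (gsA k h) (gsB k h) μ ν θ)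
      (star (Complex.ofReal ∘ postState (gsA k h) (gsB k h) μ ν θ)) := by
  have hψ : Complex.ofReal ∘ postState (gsA k h) (gsB k h) μ ν θ = (UB ν θ * PA μ) *ᵥ gs k h := by
    rw [gs_eq, UB_mul_PA_mulVec]; rfl
  rw [hψ, ← mul_vecMulVec_star_mul_conjTranspose, conjTranspose_mul, PA_conjTranspose, ρMN, gProj]
  simp only [mul_assoc]

theorem H2m_add_Vm_eq (k h : ℝ) : H2m k h + Vm k h = (h : ℂ) • Z2 + ((2 * k : ℝ) : ℂ) • XX
    + (((h ^ 2 + 2 * k ^ 2) / Real.sqrt (h ^ 2 + k ^ 2) : ℝ) : ℂ) • (1 : M4) := by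
  rw [H2m, Vm, add_div, Complex.ofReal_add, add_smul]
  abel

theorem trace_ρMN_mul_H2m_add_Vm {k : ℝ} (h : ℝ) (hk : 0 < k) {μ ν : ℝ} (hμ : μ ^ 2 = 1)
    (hν : ν ^ 2 = 1) (θ : ℝ) :
    (ρMN k h μ ν θ * (H2m k h + Vm k h)).trace
      = (((h ^ 2 + 2 * k ^ 2) * (1 - Real.cos (2 * θ)) - μ * ν * (h * k) * Real.sin (2 * θ))
          / Real.sqrt (h ^ 2 + k ^ 2) : ℝ) := by
  rw [ρMN_eq_smul_vecMulVec, smul_mul, trace_smul, trace_vecMulVec_mul, H2m_add_Vm_eq]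
  simp only [add_mulVec, smul_mulVec, dotProduct_add, dotProduct_smul,
    dotProduct_Z2_mulVec_postState _ _ _ hμ hν, dotProduct_XX_mulVec_postState _ _ _ hμ hν,
    dotProduct_one_mulVec_postState _ _ _ hμ hν, smul_eq_mul]
  norm_cast
  have hr : Real.sqrt (h ^ 2 + k ^ 2) ≠ 0 := by positivity
  have hsub : gsA k h ^ 2 - gsB k h ^ 2 = -(h / Real.sqrt (h ^ 2 + k ^ 2)) := by
    rw [gsA_sq, gsB_sq]; ring
  have hadd : gsA k h ^ 2 + gsB k h ^ 2 = 1 := by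
    rw [gsA_sq, gsB_sq]; ring
  rw [hsub, hadd, two_mul_gsA_mul_gsB h hk]
  field_simp
  ring

section optimalAngle

variable {A B : ℝ}

theorem optimal_angle_energy_neg (hB : B ≠ 0) :
    A * (1 - A / Real.sqrt (A ^ 2 + B ^ 2)) - B * (B / Real.sqrt (A ^ 2 + B ^ 2)) < 0 := by
  have hD : Real.sqrt (A ^ 2 + B ^ 2) ≠ 0 := by positivity
  have hD2 : Real.sqrt (A ^ 2 + B ^ 2) ^ 2 = A ^ 2 + B ^ 2 := Real.sq_sqrt (by positivity)
  have hAD : A < Real.sqrt (A ^ 2 + B ^ 2) :=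
    Real.lt_sqrt_of_sq_lt (lt_add_of_pos_right _ (by positivity))
  calc A * (1 - A / Real.sqrt (A ^ 2 + B ^ 2)) - B * (B / Real.sqrt (A ^ 2 + B ^ 2))
      = A - Real.sqrt (A ^ 2 + B ^ 2) := by field_simp; linear_combination hD2
    _ < 0 := sub_neg.mpr hAD

theorem optimal_angle_energy_pos (hA : 0 ≤ A) (hB : B ≠ 0) :
    0 < A * (1 - A / Real.sqrt (A ^ 2 + B ^ 2)) + B * (B / Real.sqrt (A ^ 2 + B ^ 2)) := by
  have hD : 0 < Real.sqrt (A ^ 2 + B ^ 2) := by positivity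
  have hAD : A ≤ Real.sqrt (A ^ 2 + B ^ 2) :=
    Real.le_sqrt_of_sq_le (le_add_of_nonneg_right (sq_nonneg B))
  refine add_pos_of_nonneg_of_pos (mul_nonneg hA (sub_nonneg.mpr ((div_le_one hD).mpr hAD))) ?_
  rw [← mul_div_assoc, ← sq]
  positivity

end optimalAngle

/-- State distinguishability via the local energy: at the QET-optimal
angle, `Tr[ρ(μ,μ,θ)·(H₂+V)] < 0` while `Tr[ρ(μ,−μ,θ)·(H₂+V)] > 0`, so the prover can
tell from the sign of the observed local energy whether the verifier applied
`Q₁ = U_B(μ,θ)` or `Q₂ = U_B(−μ,θ)`. -/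
theorem qet_distinguish_energy (k h : ℝ) (hk : 0 < k) (hh : 0 < h) (θ : ℝ)
    (hcos : Real.cos (2 * θ) =
      (h ^ 2 + 2 * k ^ 2) / Real.sqrt ((h ^ 2 + 2 * k ^ 2) ^ 2 + (h * k) ^ 2))
    (hsin : Real.sin (2 * θ) =
      h * k / Real.sqrt ((h ^ 2 + 2 * k ^ 2) ^ 2 + (h * k) ^ 2)) :
    ∀ μ ∈ ({-1, 1} : Set ℝ),
      (ρMN k h μ μ θ * (H2m k h + Vm k h)).trace < 0 ∧
      0 < (ρMN k h μ (-μ) θ * (H2m k h + Vm k h)).trace := by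
  intro μ hμ
  have hμ2 : μ ^ 2 = 1 := by rcases hμ with rfl | rfl <;> norm_num
  have hr : 0 < Real.sqrt (h ^ 2 + k ^ 2) := by positivity
  have hB : h * k ≠ 0 := by positivity
  rw [trace_ρMN_mul_H2m_add_Vm h hk hμ2 hμ2, trace_ρMN_mul_H2m_add_Vm h hk hμ2 (by rwa [neg_sq]),
    hcos, hsin, mul_neg, ← sq, hμ2, neg_mul, one_mul, neg_mul, sub_neg_eq_add]
  constructor
  · exact_mod_cast div_neg_of_neg_of_pos (optimal_angle_energy_neg hB) hr
  · exact_mod_cast div_pos (optimal_angle_energy_pos (by positivity) hB) hr
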